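/- arXiv:2109.02851 — 3 statements merged into one kernel-verified Lean document; each statement's English description precedes it below -/
import Mathlib

section
/- Let $D = x^{7/12+\eta-50\delta}$ with $-1/84 < \eta < 1/60$ and $0<\delta<10^{-5}$, and let $A \ge 1$ be real. Suppose real numbers $a,b,c \ge 1$ satisfy $a \le A$, $c \le D/(Ab)$, and $x^{1/6+2\eta} \le b \le x^{1/4-3\eta}$. Then the factorization $d = abc$ satisfies the three inequalities: $A^2 b c^2 \le x^{1-3\delta}$, $A^2 a b^4 c^3 \le x^{2-3\delta}$, and $A a b^5 c^2 \le x^{2-2\delta}$. -/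
/-- The programmable factorization criterion (Lemma 3.1 of the paper):
at level `D = x^(7/12+η-50δ)`, any factorization `d = a*b*c` with `a ≤ A`,
`c ≤ D/(A*b)` and `b` in the key interval satisfies the system (3.2). -/
theorem stmt_0 (x δ η A a b c : ℝ)
    (hx : 1 < x) (hδ0 : 0 < δ) (hδ1 : δ < 1/100000)
    (hη0 : -1/84 < η) (hη1 : η < 1/60)
    (hA : 1 ≤ A) (ha1 : 1 ≤ a) (hb1 : 1 ≤ b) (hc1 : 1 ≤ c)
    (haA : a ≤ A)
    (hc : c ≤ x ^ (7/12 + η - 50*δ) / (A * b))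
    (hbl : x ^ (1/6 + 2*η) ≤ b) (hbu : b ≤ x ^ (1/4 - 3*η)) :
    A^2 * b * c^2 ≤ x ^ (1 - 3*δ) ∧
    A^2 * a * b^4 * c^3 ≤ x ^ (2 - 3*δ) ∧
    A * a * b^5 * c^2 ≤ x ^ (2 - 2*δ) := by
  have hxp : (0:ℝ) < x := lt_trans one_pos hx
  have hA0 : (0:ℝ) < A := lt_of_lt_of_le one_pos hA
  have ha0 : (0:ℝ) < a := lt_of_lt_of_le one_pos ha1
  have hb0 : (0:ℝ) < b := lt_of_lt_of_le one_pos hb1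
  have hc0 : (0:ℝ) < c := lt_of_lt_of_le one_pos hc1
  have hAb : 0 < A * b := by positivity
  set e : ℝ := 7/12 + η - 50*δ with he
  have hD : A * b * c ≤ x ^ e := by
    have h := (le_div_iff₀ hAb).mp hc
    calc A * b * c = c * (A * b) := by ring
    _ ≤ x ^ e := h
  have hD0 : 0 < A * b * c := by positivity
  have key : ∀ f g : ℝ, f ≤ g → x ^ f ≤ x ^ g := fun f g h =>
    Real.rpow_le_rpow_of_exponent_le hx.le h
  have hpow2 : (x ^ e) ^ 2 = x ^ (2 * e) := by
    rw [← Real.rpow_natCast (x ^ e) 2, ← Real.rpow_mul hxp.le]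
    norm_num [mul_comm]
  have hpow3 : (x ^ e) ^ 3 = x ^ (3 * e) := by
    rw [← Real.rpow_natCast (x ^ e) 3, ← Real.rpow_mul hxp.le]
    norm_num [mul_comm]
  have hD2 : (A * b * c) ^ 2 ≤ x ^ (2 * e) := by
    rw [← hpow2]; exact pow_le_pow_left₀ hD0.le hD 2
  have hD3 : (A * b * c) ^ 3 ≤ x ^ (3 * e) := by
    rw [← hpow3]; exact pow_le_pow_left₀ hD0.le hD 3
  have hbu3 : b ^ 3 ≤ x ^ (3 * (1/4 - 3*η)) := by
    have : b ^ 3 ≤ (x ^ (1/4 - 3*η)) ^ 3 := pow_le_pow_left₀ hb0.le hbu 3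
    calc b ^ 3 ≤ (x ^ (1/4 - 3*η)) ^ 3 := this
    _ = x ^ (3 * (1/4 - 3*η)) := by
        rw [← Real.rpow_natCast (x ^ (1/4 - 3*η)) 3, ← Real.rpow_mul hxp.le]
        norm_num [mul_comm]
  refine ⟨?_, ?_, ?_⟩
  · -- A^2 * b * c^2 ≤ x ^ (1 - 3δ)
    have h1 : A^2 * b * c^2 * x ^ (1/6 + 2*η) ≤ x ^ (2 * e) := by
      calc A^2 * b * c^2 * x ^ (1/6 + 2*η) ≤ A^2 * b * c^2 * b := by
            have : (0:ℝ) < A^2 * b * c^2 := by positivity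
            exact mul_le_mul_of_nonneg_left hbl this.le
      _ = (A * b * c) ^ 2 := by ring
      _ ≤ x ^ (2 * e) := hD2
    have h2 : A^2 * b * c^2 ≤ x ^ (2 * e) / x ^ (1/6 + 2*η) :=
      (le_div_iff₀ (Real.rpow_pos_of_pos hxp _)).mpr h1
    calc A^2 * b * c^2 ≤ x ^ (2 * e) / x ^ (1/6 + 2*η) := h2
    _ = x ^ (2 * e - (1/6 + 2*η)) := (Real.rpow_sub hxp _ _).symm
    _ ≤ x ^ (1 - 3*δ) := key _ _ (by rw [he]; linarith)
  · -- A^2 * a * b^4 * c^3 ≤ x ^ (2 - 3δ)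
    have h1 : A^2 * a * b^4 * c^3 ≤ (A * b * c) ^ 3 * b := by
      have : A^2 * a * b^4 * c^3 ≤ A^2 * A * b^4 * c^3 := by
        have : (0:ℝ) ≤ A^2 * b^4 * c^3 := by positivity
        nlinarith
      calc A^2 * a * b^4 * c^3 ≤ A^2 * A * b^4 * c^3 := this
      _ = (A * b * c) ^ 3 * b := by ring
    calc A^2 * a * b^4 * c^3 ≤ (A * b * c) ^ 3 * b := h1
    _ ≤ x ^ (3 * e) * x ^ (1/4 - 3*η) := by
        apply mul_le_mul hD3 hbu (by positivity) (by positivity)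
    _ = x ^ (3 * e + (1/4 - 3*η)) := (Real.rpow_add hxp _ _).symm
    _ ≤ x ^ (2 - 3*δ) := key _ _ (by rw [he]; linarith)
  · -- A * a * b^5 * c^2 ≤ x ^ (2 - 2δ)
    have h1 : A * a * b^5 * c^2 ≤ (A * b * c) ^ 2 * b ^ 3 := by
      have : A * a * b^5 * c^2 ≤ A * A * b^5 * c^2 := by
        have : (0:ℝ) ≤ A * b^5 * c^2 := by positivity
        nlinarith
      calc A * a * b^5 * c^2 ≤ A * A * b^5 * c^2 := this
      _ = (A * b * c) ^ 2 * b ^ 3 := by ring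
    calc A * a * b^5 * c^2 ≤ (A * b * c) ^ 2 * b ^ 3 := h1
    _ ≤ x ^ (2 * e) * x ^ (3 * (1/4 - 3*η)) := by
        apply mul_le_mul hD2 hbu3 (by positivity) (by positivity)
    _ = x ^ (2 * e + 3 * (1/4 - 3*η)) := (Real.rpow_add hxp _ _).symm
    _ ≤ x ^ (2 - 2*δ) := key _ _ (by rw [he]; linarith)
end

section
/- Let $h$ be a multiplicative arithmetic function with $0 \le h(p) \le 1$ for all primes $p$, and let $\mathcal{D}^*$ be any set of squarefree positive integers with the property: for every squarefree $n = p_1\cdots p_k$ (primes $p_1 > \cdots > p_k$) not in $\mathcal{D}^*$, the minimal index $l$ with $p_1\cdots p_l \notin \mathcal{D}^*$ is odd, and $1 \in \mathcal{D}^*$, and $\mathcal{D}^*$ is closed under removing the smallest prime factor. Then for every squarefree positive integer $n$, $\prod_{p \mid n}(1 - h(p)) \le \sum_{d \mid n,\, d \in \mathcal{D}^*} \mu(d) h(d)$. -/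
open Finset

/-- The product of the `l` largest prime factors of `n`. -/
def prefixProd (n l : ℕ) : ℕ :=
  (((n.primeFactors.sort (· ≤ ·)).reverse).take l).prod

namespace StmtAux

lemma sort_prod (s : Finset ℕ) : (s.sort (· ≤ ·)).prod = ∏ p ∈ s, p := by
  have h : ((s.sort (· ≤ ·) : List ℕ) : Multiset ℕ).prod = s.val.prod := by
    rw [Finset.sort_eq]
  rw [Multiset.prod_coe] at h
  rw [h, Finset.prod_eq_multiset_prod, Multiset.map_id']

lemma prefixProd_one (l : ℕ) : prefixProd 1 l = 1 := by
  simp [prefixProd]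

lemma prefixProd_of_card_le {n l : ℕ} (hn : Squarefree n) (hl : n.primeFactors.card ≤ l) :
    prefixProd n l = n := by
  unfold prefixProd
  rw [List.take_of_length_le (by simpa using hl), List.prod_reverse, sort_prod,
    Nat.prod_primeFactors_of_squarefree hn]

lemma primeFactors_prime_mul {q m : ℕ} (hq : q.Prime) (hm : m ≠ 0) :
    (q * m).primeFactors = insert q m.primeFactors := by
  rw [Nat.primeFactors_mul hq.ne_zero hm, hq.primeFactors, ← Finset.insert_eq]

lemma prefixProd_prime_mul {q m l : ℕ} (hq : q.Prime) (hm : m ≠ 0)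
    (hlt : ∀ p ∈ m.primeFactors, q < p) (hl : l ≤ m.primeFactors.card) :
    prefixProd (q * m) l = prefixProd m l := by
  have hnot : q ∉ m.primeFactors := fun hp => lt_irrefl q (hlt q hp)
  unfold prefixProd
  rw [primeFactors_prime_mul hq hm,
    Finset.sort_insert _ (fun b hb => (hlt b hb).le) hnot, List.reverse_cons,
    List.take_append_of_le_length (by simpa using hl)]

lemma card_primeFactors_prime_mul {q m : ℕ} (hq : q.Prime) (hm : m ≠ 0)
    (hnot : q ∉ m.primeFactors) :
    (q * m).primeFactors.card = m.primeFactors.card + 1 := by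
  rw [primeFactors_prime_mul hq hm, Finset.card_insert_of_notMem hnot]

lemma minFac_prime_mul {q m : ℕ} (hq : q.Prime) (hm : m ≠ 0)
    (hlt : ∀ p ∈ m.primeFactors, q < p) : (q * m).minFac = q := by
  have hne : q * m ≠ 1 := by
    intro hqm
    exact hq.one_lt.ne' (Nat.eq_one_of_mul_eq_one_right hqm)
  refine le_antisymm (Nat.minFac_le_of_dvd hq.two_le ⟨m, rfl⟩) ?_
  have hp0 : ((q * m).minFac).Prime := Nat.minFac_prime hne
  rcases (hp0.dvd_mul).mp (Nat.minFac_dvd _) with hd | hd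
  · exact ((Nat.prime_dvd_prime_iff_eq hp0 hq).mp hd).ge
  · exact (hlt _ (Nat.mem_primeFactors.mpr ⟨hp0, hd, hm⟩)).le

lemma cardFactors_eq {d : ℕ} (hd : Squarefree d) :
    ArithmeticFunction.cardFactors d = d.primeFactors.card := by
  have h0 : d ≠ 0 := hd.ne_zero
  rw [← (ArithmeticFunction.cardDistinctFactors_eq_cardFactors_iff_squarefree h0).mpr hd,
    ArithmeticFunction.cardDistinctFactors_apply]
  show _ = (d.primeFactorsList.toFinset).card
  rw [List.card_toFinset]

lemma divisors_prime_mul {q m : ℕ} (hq : q.Prime) (hm : m ≠ 0) (hqm : ¬ q ∣ m) :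
    (q * m).divisors = m.divisors ∪ m.divisors.image (q * ·) := by
  ext d
  simp only [Nat.mem_divisors, Finset.mem_union, Finset.mem_image]
  constructor
  · rintro ⟨hd, -⟩
    by_cases hqd : q ∣ d
    · obtain ⟨e, rfl⟩ := hqd
      exact Or.inr ⟨e, ⟨(Nat.mul_dvd_mul_iff_left hq.pos).mp hd, hm⟩, rfl⟩
    · exact Or.inl ⟨(Nat.Coprime.symm (hq.coprime_iff_not_dvd.mpr hqd)).dvd_of_dvd_mul_left hd, hm⟩
  · rintro (⟨hd, -⟩ | ⟨e, ⟨he, -⟩, rfl⟩)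
    · exact ⟨hd.mul_left q, mul_ne_zero hq.ne_zero hm⟩
    · exact ⟨Nat.mul_dvd_mul_left q he, mul_ne_zero hq.ne_zero hm⟩

lemma sum_divisors_prime_mul (f : ℕ → ℝ) {q m : ℕ} (hq : q.Prime) (hm : m ≠ 0)
    (hqm : ¬ q ∣ m) :
    ∑ d ∈ (q * m).divisors, f d = ∑ d ∈ m.divisors, f d + ∑ d ∈ m.divisors, f (q * d) := by
  rw [divisors_prime_mul hq hm hqm, Finset.sum_union, Finset.sum_image]
  · intro x _ y _ hxy
    exact Nat.eq_of_mul_eq_mul_left hq.pos hxy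
  · rw [Finset.disjoint_left]
    rintro a ha hb
    simp only [Finset.mem_image, Nat.mem_divisors] at ha hb
    obtain ⟨e, ⟨he, -⟩, rfl⟩ := hb
    exact hqm (dvd_trans ⟨e, rfl⟩ ha.1)

end StmtAux

/-- Lemma 4.2 of the paper: for a support set `Dstar` whose minimal failing
index is always odd, containing 1 and closed under removing the smallest
prime factor, the truncated Möbius sum bounds the full product. -/
theorem stmt_1 (h : ℕ → ℝ)
    (hmul1 : h 1 = 1)
    (hmul : ∀ m n : ℕ, Nat.Coprime m n → h (m * n) = h m * h n)
    (hbd : ∀ p : ℕ, p.Prime → 0 ≤ h p ∧ h p ≤ 1)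
    (Dstar : Set ℕ) [DecidablePred (· ∈ Dstar)]
    (hsf : ∀ n ∈ Dstar, 0 < n ∧ Squarefree n)
    (h1 : 1 ∈ Dstar)
    (hclosed : ∀ n ∈ Dstar, 1 < n → n / n.minFac ∈ Dstar)
    (hodd : ∀ n : ℕ, Squarefree n → 0 < n → ∀ l : ℕ, l ≤ n.primeFactors.card →
      prefixProd n l ∉ Dstar → (∀ m < l, prefixProd n m ∈ Dstar) → Odd l) :
    ∀ n : ℕ, 0 < n → Squarefree n →
      ∏ p ∈ n.primeFactors, (1 - h p) ≤
        ∑ d ∈ n.divisors.filter (· ∈ Dstar),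
          ((ArithmeticFunction.moebius d : ℤ) : ℝ) * h d := by
  classical
  -- nonnegativity of h on squarefree numbers
  have hpos : ∀ d : ℕ, Squarefree d → 0 ≤ h d := by
    intro d
    induction d using Nat.strong_induction_on with
    | _ d ih =>
      intro hd
      rcases eq_or_ne d 1 with hd1 | hd1
      · rw [hd1, hmul1]; exact zero_le_one
      · have hd0 : d ≠ 0 := hd.ne_zero
        set q := d.minFac with hqdef
        have hq : q.Prime := Nat.minFac_prime hd1
        have hdq : d = q * (d / q) := (Nat.mul_div_cancel' (Nat.minFac_dvd d)).symm
        have hqm : ¬ q ∣ d / q := by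
          intro hdvd
          have : q * q ∣ d := by
            rw [hdq]; exact mul_dvd_mul_left q hdvd
          exact hq.one_lt.ne' (Nat.isUnit_iff.mp (hd q this))
        have hcop : Nat.Coprime q (d / q) := hq.coprime_iff_not_dvd.mpr hqm
        have hmq : d / q < d := Nat.div_lt_self (Nat.pos_of_ne_zero hd0) hq.one_lt
        have hsq : Squarefree (d / q) := hd.squarefree_of_dvd (Nat.div_dvd_of_dvd (Nat.minFac_dvd d))
        calc (0:ℝ) ≤ h q * h (d / q) := mul_nonneg (hbd q hq).1 (ih _ hmq hsq)
          _ = h d := by rw [← hmul _ _ hcop, ← hdq]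
  -- membership of all prefixes of an element of Dstar
  have hpre : ∀ d ∈ Dstar, ∀ l : ℕ, prefixProd d l ∈ Dstar := by
    intro d
    induction d using Nat.strong_induction_on with
    | _ d ih =>
      intro hd l
      obtain ⟨hd0, hdsq⟩ := hsf d hd
      rcases eq_or_ne d 1 with hd1 | hd1
      · rw [hd1, StmtAux.prefixProd_one]; exact h1
      · set q := d.minFac with hqdef
        have hq : q.Prime := Nat.minFac_prime hd1
        set m := d / q with hmdef
        have hdq : d = q * m := (Nat.mul_div_cancel' (Nat.minFac_dvd d)).symm
        have hqm : ¬ q ∣ m := by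
          intro hdvd
          have : q * q ∣ d := by
            rw [hdq]; exact mul_dvd_mul_left q hdvd
          exact hq.one_lt.ne' (Nat.isUnit_iff.mp (hdsq q this))
        have hm0 : m ≠ 0 := by
          intro hm; rw [hdq, hm, mul_zero] at hd0; exact lt_irrefl 0 hd0
        have hlt : ∀ p ∈ m.primeFactors, q < p := by
          intro p hp
          have hpp := Nat.prime_of_mem_primeFactors hp
          have hpd : p ∣ d := (Nat.dvd_of_mem_primeFactors hp).trans (Nat.div_dvd_of_dvd (Nat.minFac_dvd d))
          have hle : q ≤ p := Nat.minFac_le_of_dvd hpp.two_le hpd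
          rcases lt_or_eq_of_le hle with hlt | heq
          · exact hlt
          · exact absurd (heq ▸ Nat.dvd_of_mem_primeFactors hp) hqm
        have h1d : 1 < d := by omega
        have hmem : m ∈ Dstar := hclosed d hd h1d
        rcases le_or_gt l m.primeFactors.card with hl | hl
        · rw [hdq, StmtAux.prefixProd_prime_mul hq hm0 hlt hl]
          have hmlt : m < d := Nat.div_lt_self hd0 hq.one_lt
          exact ih m hmlt hmem l
        · have hcard : d.primeFactors.card ≤ l := by
            have hnot : q ∉ m.primeFactors := fun hp => lt_irrefl q (hlt q hp)
            rw [hdq, StmtAux.card_primeFactors_prime_mul hq hm0 hnot]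
            omega
          rw [StmtAux.prefixProd_of_card_le hdsq hcard]
          exact hd
  -- main induction
  intro n
  induction n using Nat.strong_induction_on with
  | _ n ih =>
    intro hn hsq
    rcases eq_or_ne n 1 with hn1 | hn1
    · subst hn1
      simp [Nat.divisors_one, Finset.filter_singleton, h1, hmul1]
    · set q := n.minFac with hqdef
      have hq : q.Prime := Nat.minFac_prime hn1
      set m := n / q with hmdef
      have hnq : n = q * m := (Nat.mul_div_cancel' (Nat.minFac_dvd n)).symm
      have hqm : ¬ q ∣ m := by
        intro hdvd
        have : q * q ∣ n := by
          rw [hnq]; exact mul_dvd_mul_left q hdvd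
        exact hq.one_lt.ne' (Nat.isUnit_iff.mp (hsq q this))
      have hm0 : m ≠ 0 := by
        intro hm; rw [hnq, hm, mul_zero] at hn; exact lt_irrefl 0 hn
      have hmsq : Squarefree m := hsq.squarefree_of_dvd (Nat.div_dvd_of_dvd (Nat.minFac_dvd n))
      have hmlt : m < n := Nat.div_lt_self hn hq.one_lt
      have hlt : ∀ p ∈ m.primeFactors, q < p := by
        intro p hp
        have hpp := Nat.prime_of_mem_primeFactors hp
        have hpd : p ∣ n := (Nat.dvd_of_mem_primeFactors hp).trans (Nat.div_dvd_of_dvd (Nat.minFac_dvd n))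
        have hle : q ≤ p := Nat.minFac_le_of_dvd hpp.two_le hpd
        rcases lt_or_eq_of_le hle with hlt' | heq
        · exact hlt'
        · exact absurd (heq ▸ Nat.dvd_of_mem_primeFactors hp) hqm
      have hqnotm : q ∉ m.primeFactors := fun hp => lt_irrefl q (hlt q hp)
      -- abbreviations
      set F : ℕ → ℝ := fun d => if d ∈ Dstar then ((ArithmeticFunction.moebius d : ℤ) : ℝ) * h d else 0 with hFdef
      have hfilter : ∀ k : ℕ, ∑ d ∈ k.divisors.filter (· ∈ Dstar),
          ((ArithmeticFunction.moebius d : ℤ) : ℝ) * h d = ∑ d ∈ k.divisors, F d := by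
        intro k; rw [Finset.sum_filter]
      -- properties of divisors of m
      have hdprop : ∀ d ∈ m.divisors, Squarefree d ∧ Nat.Coprime q d ∧ (∀ p ∈ d.primeFactors, q < p) := by
        intro d hdm
        obtain ⟨hdvd, -⟩ := Nat.mem_divisors.mp hdm
        have hdsq : Squarefree d := hmsq.squarefree_of_dvd hdvd
        have hsub : d.primeFactors ⊆ m.primeFactors := Nat.primeFactors_mono hdvd hm0
        have hltd : ∀ p ∈ d.primeFactors, q < p := fun p hp => hlt p (hsub hp)
        have hcop : Nat.Coprime q d := by
          refine hq.coprime_iff_not_dvd.mpr fun hdvd' => ?_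
          have : q ∈ d.primeFactors := Nat.mem_primeFactors.mpr ⟨hq, hdvd', hdsq.ne_zero⟩
          exact lt_irrefl q (hltd q this)
        exact ⟨hdsq, hcop, hltd⟩
      -- termwise comparison
      have hterm : ∀ d ∈ m.divisors,
          (if q * d ∈ Dstar then ((ArithmeticFunction.moebius d : ℤ) : ℝ) * h d else 0) ≤ F d := by
        intro d hdm
        obtain ⟨hdsq, hcop, hltd⟩ := hdprop d hdm
        have hd0 : d ≠ 0 := hdsq.ne_zero
        by_cases hqd : q * d ∈ Dstar
        · -- then d ∈ Dstar
          have hmin : (q * d).minFac = q := StmtAux.minFac_prime_mul hq hd0 hltd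
          have h1lt : 1 < q * d := by
            calc 1 < q := hq.one_lt
            _ ≤ q * d := Nat.le_mul_of_pos_right q (Nat.pos_of_ne_zero hd0)
          have hdin : d ∈ Dstar := by
            have := hclosed _ hqd h1lt
            rwa [hmin, Nat.mul_div_cancel_left d hq.pos] at this
          rw [if_pos hqd]
          simp only [hFdef, if_pos hdin]
          exact le_refl _
        · rw [if_neg hqd]
          by_cases hdin : d ∈ Dstar
          · -- show 0 ≤ μ d * h d : μ d = 1 since card of primeFactors d is even
            have hqdsq : Squarefree (q * d) := (Nat.squarefree_mul hcop).mpr ⟨hq.squarefree, hdsq⟩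
            have hcard : (q * d).primeFactors.card = d.primeFactors.card + 1 :=
              StmtAux.card_primeFactors_prime_mul hq hd0 (fun hp => lt_irrefl q (hltd q hp))
            have hoddl : Odd (d.primeFactors.card + 1) := by
              refine hodd (q * d) hqdsq (Nat.pos_of_ne_zero (mul_ne_zero hq.ne_zero hd0))
                (d.primeFactors.card + 1) (le_of_eq hcard.symm) ?_ ?_
              · rw [StmtAux.prefixProd_of_card_le hqdsq (le_of_eq hcard)]
                exact hqd
              · intro m' hm'
                have hm'le : m' ≤ d.primeFactors.card := Nat.lt_succ_iff.mp hm'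
                rw [StmtAux.prefixProd_prime_mul hq hd0 hltd hm'le]
                exact hpre d hdin m'
            have heven : Even d.primeFactors.card := by
              rcases hoddl with ⟨t, ht⟩
              exact ⟨t, by omega⟩
            have hmu : ArithmeticFunction.moebius d = 1 := by
              rw [ArithmeticFunction.moebius_apply_of_squarefree hdsq, StmtAux.cardFactors_eq hdsq,
                heven.neg_one_pow]
            simp only [hFdef, if_pos hdin, hmu]
            simpa using hpos d hdsq
          · simp only [hFdef, if_neg hdin]; exact le_refl 0
      -- the sum over divisors of q*m splits
      have hsplit : ∑ d ∈ (q * m).divisors, F d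
          = ∑ d ∈ m.divisors, F d + ∑ d ∈ m.divisors, F (q * d) :=
        StmtAux.sum_divisors_prime_mul F hq hm0 hqm
      -- rewrite F (q * d)
      have hFq : ∀ d ∈ m.divisors, F (q * d)
          = -(h q) * (if q * d ∈ Dstar then ((ArithmeticFunction.moebius d : ℤ) : ℝ) * h d else 0) := by
        intro d hdm
        obtain ⟨hdsq, hcop, -⟩ := hdprop d hdm
        simp only [hFdef]
        by_cases hqd : q * d ∈ Dstar
        · simp only [if_pos hqd]
          have hmu : ArithmeticFunction.moebius (q * d)
              = ArithmeticFunction.moebius q * ArithmeticFunction.moebius d :=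
            ArithmeticFunction.isMultiplicative_moebius.map_mul_of_coprime hcop
          rw [hmu, ArithmeticFunction.moebius_apply_prime hq, hmul q d hcop]
          push_cast
          ring
        · simp only [if_neg hqd, mul_zero]
      -- put it together
      have hprod : ∏ p ∈ n.primeFactors, (1 - h p)
          = (1 - h q) * ∏ p ∈ m.primeFactors, (1 - h p) := by
        rw [hnq, StmtAux.primeFactors_prime_mul hq hm0, Finset.prod_insert hqnotm]
      have hIH : ∏ p ∈ m.primeFactors, (1 - h p) ≤ ∑ d ∈ m.divisors, F d := by
        rw [← hfilter m]
        exact ih m hmlt (Nat.pos_of_ne_zero hm0) hmsq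
      have hq0 : 0 ≤ h q := (hbd q hq).1
      have hq1 : h q ≤ 1 := (hbd q hq).2
      have hA : ∑ d ∈ m.divisors,
          (if q * d ∈ Dstar then ((ArithmeticFunction.moebius d : ℤ) : ℝ) * h d else 0)
          ≤ ∑ d ∈ m.divisors, F d := Finset.sum_le_sum hterm
      rw [hfilter n, hnq, hsplit, Finset.sum_congr rfl hFq, ← Finset.mul_sum,
        StmtAux.primeFactors_prime_mul hq hm0, Finset.prod_insert hqnotm]
      set A := ∑ d ∈ m.divisors,
          (if q * d ∈ Dstar then ((ArithmeticFunction.moebius d : ℤ) : ℝ) * h d else 0)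
      set S := ∑ d ∈ m.divisors, F d
      calc (1 - h q) * ∏ p ∈ m.primeFactors, (1 - h p)
          ≤ (1 - h q) * S := by
            apply mul_le_mul_of_nonneg_left hIH (by linarith)
        _ = S + -(h q) * S := by ring
        _ ≤ S + -(h q) * A := by
            have : h q * A ≤ h q * S := mul_le_mul_of_nonneg_left hA hq0
            linarith
end

section
/- Let $D \ge 1$ and define $\mathcal{D}^+(D)$ as the set of squarefree integers $p_1\cdots p_r$ with primes $D^{1/2} \ge p_1 \ge \cdots \ge p_r$ such that $p_1\cdots p_{l-1} p_l^3 \le D$ for each odd $l \le r$ (the empty product $1$ belongs to $\mathcal{D}^+(D)$). Then for any $d = p_1 \cdots p_r \in \mathcal{D}^+(D)$ with $p_1 \ge \cdots \ge p_r$ and any $m \le r$, one has $p_1 \cdots p_m < D^{1 - 2^{-m}}$. -/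
/-!
Write `P n` for the product of the `n` largest prime factors. If `n + 1` is odd, the sieve
condition at `n + 1` gives `P (n+1)^3 = P n^2 · (P n · p_{n+1}^3) ≤ P n^2 · D`; if `n + 1` is
even, monotonicity `p_{n+1} ≤ p_n` and the condition at `n` give
`P (n+1)^3 ≤ P (n-1) · (P (n-1) · p_n^3)^2 ≤ P (n-1) · D^2`. Feeding the bound
`P k ≤ D^(1 - 2^{-k})` for `k ≤ n` into either estimate yields
`P (n+1) ≤ D^(1 - (2/3) 2^{-n})`, which is strictly below `D^(1 - 2^{-(n+1)})` once `D > 1`.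
-/

lemma Real.le_rpow_of_pow_le_rpow_mul {x D a : ℝ} {k : ℕ} (hk : k ≠ 0) (hx : 0 ≤ x)
    (hD : 0 ≤ D) (h : x ^ k ≤ D ^ (a * k)) : x ≤ D ^ a := by
  rw [Real.rpow_mul_natCast hD] at h
  exact (pow_le_pow_iff_left₀ hx (Real.rpow_nonneg hD a) hk).mp h

lemma inv_two_pow_succ_lt_two_div_three_mul (n : ℕ) :
    ((2 : ℝ) ^ (n + 1))⁻¹ < 2 / (3 * 2 ^ n) := by
  rw [pow_succ, inv_eq_one_div, div_lt_div_iff₀ (by positivity) (by positivity)]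
  nlinarith [pow_pos (zero_lt_two : (0 : ℝ) < 2) n]

/-- `L = [p₁, …, p_r]` is indexed from `0`, so `L[l] = p_{l+1}` and `Odd (l + 1)` is the paper's
condition on odd indices. -/
structure UpperSieveSupport (D : ℝ) (L : List ℝ) : Prop where
  pairwise_ge : L.Pairwise (· ≥ ·)
  prod_take_mul_pow_three_le :
    ∀ l (hl : l < L.length), Odd (l + 1) → (L.take l).prod * L[l] ^ 3 ≤ D

namespace UpperSieveSupport

variable {D : ℝ} {L : List ℝ}

lemma one_lt (hL : UpperSieveSupport D L) (h1 : ∀ x ∈ L, 1 < x) (hne : L ≠ []) : 1 < D := by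
  have hlen : 0 < L.length := List.length_pos_iff.mpr hne
  have h := hL.prod_take_mul_pow_three_le 0 hlen (by decide)
  rw [List.take_zero, List.prod_nil, one_mul] at h
  exact (one_lt_pow₀ (h1 _ (List.getElem_mem hlen)) three_ne_zero).trans_le h

lemma prod_take_succ_pow_three_le_of_odd (hL : UpperSieveSupport D L) (h0 : ∀ x ∈ L, 0 ≤ x)
    {n : ℕ} (hn : n < L.length) (hodd : Odd (n + 1)) :
    (L.take (n + 1)).prod ^ 3 ≤ (L.take n).prod ^ 2 * D := by
  have hP : 0 ≤ (L.take n).prod := List.prod_nonneg fun x hx => h0 x (List.mem_of_mem_take hx)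
  calc (L.take (n + 1)).prod ^ 3 = (L.take n).prod ^ 2 * ((L.take n).prod * L[n] ^ 3) := by
        rw [List.prod_take_succ L n hn]; ring
    _ ≤ (L.take n).prod ^ 2 * D := by
        gcongr; exact hL.prod_take_mul_pow_three_le n hn hodd

lemma prod_take_add_two_pow_three_le_of_odd (hL : UpperSieveSupport D L) (h0 : ∀ x ∈ L, 0 ≤ x)
    {k : ℕ} (hk : k + 1 < L.length) (hodd : Odd (k + 1)) :
    (L.take (k + 2)).prod ^ 3 ≤ (L.take k).prod * D ^ 2 := by
  have hk' : k < L.length := k.lt_succ_self.trans hk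
  have hP : 0 ≤ (L.take k).prod := List.prod_nonneg fun x hx => h0 x (List.mem_of_mem_take hx)
  have hq : 0 ≤ L[k] := h0 _ (List.getElem_mem hk')
  have hle : L[k + 1] ≤ L[k] :=
    List.pairwise_iff_getElem.mp hL.pairwise_ge k (k + 1) hk' hk k.lt_succ_self
  calc (L.take (k + 2)).prod ^ 3 = ((L.take k).prod * L[k] * L[k + 1]) ^ 3 := by
        rw [List.prod_take_succ L (k + 1) hk, List.prod_take_succ L k hk']
    _ ≤ ((L.take k).prod * L[k] * L[k]) ^ 3 := by
        have hp : 0 ≤ L[k + 1] := h0 _ (List.getElem_mem hk)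
        gcongr
    _ = (L.take k).prod * ((L.take k).prod * L[k] ^ 3) ^ 2 := by ring
    _ ≤ (L.take k).prod * D ^ 2 := by
        gcongr; exact hL.prod_take_mul_pow_three_le k hk' hodd

lemma map_natCast {L : List ℕ} (hsorted : L.Pairwise (· ≥ ·))
    (hplus : ∀ l (hl : l < L.length), Odd (l + 1) →
      ((L.take l).prod : ℝ) * ((L.get ⟨l, hl⟩ : ℕ) : ℝ) ^ 3 ≤ D) :
    UpperSieveSupport D (L.map (↑)) where
  pairwise_ge := List.pairwise_map.mpr (hsorted.imp fun h => by exact_mod_cast h)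
  prod_take_mul_pow_three_le l hl hodd := by
    rw [List.length_map] at hl
    simpa [← List.map_take, Nat.cast_list_prod] using hplus l hl hodd

lemma prod_take_succ_le_rpow (hL : UpperSieveSupport D L) (h0 : ∀ x ∈ L, 0 ≤ x) (hD : 0 < D)
    {n : ℕ} (hn : n < L.length)
    (hprev : ∀ m ≤ n, (L.take m).prod ≤ D ^ (1 - (2 ^ m)⁻¹ : ℝ)) :
    (L.take (n + 1)).prod ≤ D ^ (1 - 2 / (3 * 2 ^ n) : ℝ) := by
  refine Real.le_rpow_of_pow_le_rpow_mul three_ne_zero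
    (List.prod_nonneg fun x hx => h0 x (List.mem_of_mem_take hx)) hD.le ?_
  obtain he | ho := Nat.even_or_odd n
  · calc _ ≤ (L.take n).prod ^ 2 * D :=
          hL.prod_take_succ_pow_three_le_of_odd h0 hn he.add_one
      _ ≤ (D ^ (1 - (2 ^ n)⁻¹ : ℝ)) ^ 2 * D := by
          have hP : 0 ≤ (L.take n).prod :=
            List.prod_nonneg fun x hx => h0 x (List.mem_of_mem_take hx)
          gcongr; exact hprev n le_rfl
      _ = _ := by
          rw [← Real.rpow_natCast _ 2, ← Real.rpow_mul hD.le, ← Real.rpow_add_one hD.ne']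
          congr 1; field_simp; ring
  · obtain ⟨k, rfl⟩ : ∃ k, n = k + 1 := ⟨n - 1, by have := ho.pos; omega⟩
    calc _ ≤ (L.take k).prod * D ^ 2 := hL.prod_take_add_two_pow_three_le_of_odd h0 hn ho
      _ ≤ D ^ (1 - (2 ^ k)⁻¹ : ℝ) * D ^ 2 := by gcongr; exact hprev k k.le_succ
      _ = _ := by
          rw [← Real.rpow_natCast D 2, ← Real.rpow_add hD]
          congr 1; push_cast; field_simp; ring

lemma prod_take_le_rpow (hL : UpperSieveSupport D L) (h0 : ∀ x ∈ L, 0 ≤ x) (hD : 1 ≤ D) :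
    ∀ n ≤ L.length, (L.take n).prod ≤ D ^ (1 - (2 ^ n)⁻¹ : ℝ) := by
  intro n
  induction n using Nat.strong_induction_on with
  | _ n ih =>
    intro hn
    rcases n with _ | n
    · simp
    · calc _ ≤ D ^ (1 - 2 / (3 * 2 ^ n) : ℝ) :=
            hL.prod_take_succ_le_rpow h0 (by linarith) hn fun m hm => ih m (by omega) (by omega)
        _ ≤ _ := Real.rpow_le_rpow_of_exponent_le hD
            (by linarith [inv_two_pow_succ_lt_two_div_three_mul n])

lemma prod_take_lt_rpow (hL : UpperSieveSupport D L) (h1 : ∀ x ∈ L, 1 < x) {m : ℕ}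
    (hm : m ≠ 0) (hmL : m ≤ L.length) : (L.take m).prod < D ^ (1 - (2 ^ m)⁻¹ : ℝ) := by
  have hD : 1 < D := hL.one_lt h1 (List.ne_nil_of_length_pos (by omega))
  have h0 : ∀ x ∈ L, 0 ≤ x := fun x hx => zero_le_one.trans (h1 x hx).le
  obtain ⟨n, rfl⟩ : ∃ n, m = n + 1 := ⟨m - 1, by omega⟩
  calc _ ≤ D ^ (1 - 2 / (3 * 2 ^ n) : ℝ) :=
        hL.prod_take_succ_le_rpow h0 (by linarith) hmL
          fun k hk => hL.prod_take_le_rpow h0 hD.le k (by omega)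
    _ < _ := Real.rpow_lt_rpow_of_exponent_lt hD
        (by linarith [inv_two_pow_succ_lt_two_div_three_mul n])

end UpperSieveSupport

theorem stmt_2_general (D : ℝ) (L : List ℕ)
    (hprime : ∀ p ∈ L, Nat.Prime p)
    (hsorted : L.Pairwise (· ≥ ·))
    (hplus : ∀ l (hl : l < L.length), Odd (l + 1) →
      ((L.take l).prod : ℝ) * ((L.get ⟨l, hl⟩ : ℕ) : ℝ)^3 ≤ D) :
    ∀ m, 1 ≤ m → m ≤ L.length →
      ((L.take m).prod : ℝ) < D ^ (1 - (2:ℝ) ^ (-(m:ℝ))) := by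
  intro m hm hmL
  have h1 : ∀ x ∈ L.map (Nat.cast : ℕ → ℝ), 1 < x := by
    simp only [List.mem_map]
    rintro _ ⟨p, hp, rfl⟩
    exact_mod_cast (hprime p hp).one_lt
  have h := (UpperSieveSupport.map_natCast hsorted hplus).prod_take_lt_rpow h1
    (m := m) (by omega) (by simpa using hmL)
  rwa [← List.map_take, ← Nat.cast_list_prod, ← Real.rpow_natCast,
    ← Real.rpow_neg zero_le_two] at h

/-- For `d = p₁⋯p_r ∈ 𝒟⁺(D)` (decreasing primes `≤ D^(1/2)` with
`p₁⋯p_{l-1}p_l³ ≤ D` for odd `l`), the product of the `m` largest prime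
factors satisfies `p₁⋯p_m < D^(1-2^{-m})`. -/
theorem stmt_2 (D : ℝ) (hD : 1 ≤ D) (L : List ℕ)
    (hprime : ∀ p ∈ L, Nat.Prime p)
    (hsorted : L.Pairwise (· ≥ ·))
    (hsize : ∀ p ∈ L, (p : ℝ) ≤ D ^ ((1:ℝ)/2))
    (hplus : ∀ l (hl : l < L.length), Odd (l + 1) →
      ((L.take l).prod : ℝ) * ((L.get ⟨l, hl⟩ : ℕ) : ℝ)^3 ≤ D) :
    ∀ m, 1 ≤ m → m ≤ L.length →
      ((L.take m).prod : ℝ) < D ^ (1 - (2:ℝ) ^ (-(m:ℝ))) :=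
  stmt_2_general D L hprime hsorted hplus
end
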